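/- arXiv:math/0402302 — 2 statements merged into one kernel-verified Lean document; each statement's English description precedes it below -/
import Mathlib

section
/- Let (X,P) be an irreducible Markov chain on a countable state space X such that the associated Markov operator P : ℓ∞(X) → ℓ∞(X), (Pf)(x) = Σ_{y∈X} p(x,y) f(y), is a compact operator. Then (X,P) is positive recurrent. -/
open scoped Classical ENNReal

noncomputable section

/-- The `n`-step transition probabilities: the entries of the `n`-th matrix power of `p`. -/
def matPow {X : Type*} (p : X → X → ℝ) : ℕ → X → X → ℝ
  | 0 => fun x y => if x = y then 1 else 0
  | n + 1 => fun x y => ∑' z, matPow p n x z * p z y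

/-- The first-return probabilities `f⁽ⁿ⁾(x,y)`. -/
def fret {X : Type*} (p : X → X → ℝ) : ℕ → X → X → ℝ
  | 0 => fun _ _ => 0
  | 1 => fun x y => p x y
  | n + 2 => fun x y => ∑' z, if z = y then 0 else p x z * fret p (n + 1) z y

/-- `p` is a stochastic matrix. -/
def IsStochastic {X : Type*} (p : X → X → ℝ) : Prop :=
  (∀ x y, 0 ≤ p x y) ∧ (∀ x, Summable (p x)) ∧ (∀ x, ∑' y, p x y = 1)

/-!
Compactness of the Markov operator makes the rows of `p` uniformly tight: a single finite set `F`
carries at least half of the mass of every row. By irreducibility, from every point of `F` the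
chain hits `x` within `m` steps with probability at least some `δ > 0`. Hence from any starting
point the probability of avoiding `x` during `m + 1` steps is at most `1 - δ + δ / 2 < 1`, so the
tail of the return time to `x` decays geometrically and its mean is finite.
-/

open Filter Topology

namespace lp

variable {α : Type*} {E : α → Type*} [∀ i, NormedAddCommGroup (E i)] {q : ℝ≥0∞} [Fact (1 ≤ q)]

theorem tendsto_of_isCompact_of_tendsto_apply {ι : Type*} {l : Filter ι} {g : ι → lp E q}
    {K : Set (lp E q)} {a : lp E q} (hK : IsCompact K) (hgK : ∀ᶠ i in l, g i ∈ K)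
    (h : ∀ z, Tendsto (fun i => g i z) l (𝓝 (a z))) : Tendsto g l (𝓝 a) := by
  refine hK.tendsto_nhds_of_unique_mapClusterPt hgK fun b _ hb => lp.ext (funext fun z => ?_)
  have hbz : MapClusterPt (b z) l (fun i => g i z) :=
    hb.tendsto_comp ((lipschitzWith_one_eval q z).continuous.tendsto b)
  exact eq_of_nhds_neBot (ClusterPt.mono hbz (h z))

def indicatorOne (A : Set α) : lp (fun _ : α => ℝ) ∞ :=
  ⟨A.indicator 1, memℓp_infty ⟨1, Set.forall_mem_range.2 fun w => by
    by_cases hw : w ∈ A <;> simp [hw]⟩⟩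

theorem coe_indicatorOne (A : Set α) : ⇑(indicatorOne A) = A.indicator 1 := rfl

theorem norm_indicatorOne_le (A : Set α) : ‖indicatorOne A‖ ≤ 1 :=
  norm_le_of_forall_le zero_le_one fun w => by
    by_cases hw : w ∈ A <;> simp [coe_indicatorOne, hw]

end lp

theorem ENNReal.ofReal_tsum_le {α : Type*} {f : α → ℝ} (hf : ∀ a, 0 ≤ f a) :
    ENNReal.ofReal (∑' a, f a) ≤ ∑' a, ENNReal.ofReal (f a) := by
  by_cases hs : Summable f
  · rw [ENNReal.ofReal_tsum_of_nonneg hf hs]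
  · simp [tsum_eq_zero_of_not_summable hs]

theorem summable_pow_mul_pow_div (k : ℕ) {r : ℝ} (hr0 : 0 ≤ r) (hr1 : r < 1) {M : ℕ}
    (hM : M ≠ 0) : Summable (fun n : ℕ => (n : ℝ) ^ k * r ^ (n / M)) := by
  -- `s ≥ r` is positive and `t` is an `M`-th root of it, so that `r ^ (n / M) ≤ s⁻¹ * t ^ n`
  set s := max r (1 / 2)
  have hs0 : 0 < s := lt_max_of_lt_right (by norm_num)
  have hs1 : s < 1 := max_lt hr1 (by norm_num)
  set t := s ^ ((M : ℝ)⁻¹)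
  have ht : t ^ M = s := Real.rpow_inv_natCast_pow hs0.le hM
  have ht0 : 0 ≤ t := Real.rpow_nonneg hs0.le _
  have ht1 : t < 1 := Real.rpow_lt_one hs0.le hs1 (by positivity)
  have hbound (n : ℕ) : r ^ (n / M) ≤ s⁻¹ * t ^ n := by
    rw [le_inv_mul_iff₀ hs0]
    calc s * r ^ (n / M) ≤ s * s ^ (n / M) := by gcongr; exact le_max_left _ _
      _ = t ^ (M * (n / M + 1)) := by rw [pow_mul, ht, pow_succ']
      _ ≤ t ^ n := pow_le_pow_of_le_one ht0 ht1.le (by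
          have := Nat.lt_div_mul_add (a := n) (Nat.pos_of_ne_zero hM)
          rw [Nat.mul_add, Nat.mul_comm]; omega)
  have hgeom := (summable_pow_mul_geometric_of_norm_lt_one k
    (by rwa [Real.norm_of_nonneg ht0])).mul_left s⁻¹
  refine hgeom.of_nonneg_of_le (fun n => mul_nonneg (by positivity) (pow_nonneg hr0 _)) fun n => ?_
  calc (n : ℝ) ^ k * r ^ (n / M) ≤ n ^ k * (s⁻¹ * t ^ n) := by gcongr; exact hbound n
    _ = s⁻¹ * (n ^ k * t ^ n) := by ring

/-- The indicators of the complements of finite sets lie in the unit ball, and their images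
under `T` tend to `0` pointwise, hence in norm by compactness. -/
theorem exists_finset_tsum_compl_lt_of_isCompactOperator {X : Type*} {p : X → X → ℝ}
    {T : lp (fun _ : X => ℝ) ∞ →L[ℝ] lp (fun _ : X => ℝ) ∞}
    (hT : ∀ (f : lp (fun _ : X => ℝ) ∞) (x : X), T f x = ∑' y, p x y * f y)
    (hcpt : IsCompactOperator T) {ε : ℝ} (hε : 0 < ε) :
    ∃ F : Finset X, ∀ z, ∑' w : {w // w ∉ F}, p z w < ε := by
  set g : Finset X → lp (fun _ : X => ℝ) ∞ := fun s => T (lp.indicatorOne (↑s)ᶜ)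
  have hg : ∀ s z, g s z = ∑' w : {w // w ∉ s}, p z w := fun s z => by
    rw [hT]
    refine (tsum_congr fun w => ?_).trans (tsum_subtype ((↑s)ᶜ : Set X) (p z)).symm
    by_cases hw : w ∈ s <;> simp [lp.coe_indicatorOne, hw]
  have hlim : Tendsto g atTop (𝓝 0) := by
    refine lp.tendsto_of_isCompact_of_tendsto_apply (hcpt.isCompact_closure_image_closedBall 1)
      (Eventually.of_forall fun s => subset_closure (Set.mem_image_of_mem T ?_)) fun z => ?_
    · exact mem_closedBall_zero_iff.2 (lp.norm_indicatorOne_le _)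
    · simpa only [hg, lp.coeFn_zero, Pi.zero_apply] using tendsto_tsum_compl_atTop_zero (p z)
  obtain ⟨F, hF⟩ := (hlim.norm.eventually (gt_mem_nhds (by simpa using hε))).exists
  refine ⟨F, fun z => ?_⟩
  calc ∑' w : {w // w ∉ F}, p z w = g F z := (hg F z).symm
    _ ≤ ‖g F‖ := (Real.le_norm_self _).trans (lp.norm_apply_le_norm ENNReal.top_ne_zero _ z)
    _ < ε := hF

theorem fret_nonneg {X : Type*} {p : X → X → ℝ} (hp : ∀ x y, 0 ≤ p x y) :
    ∀ n (x y : X), 0 ≤ fret p n x y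
  | 0, _, _ => le_rfl
  | 1, x, y => hp x y
  | n + 2, x, y => tsum_nonneg fun z => by
    split_ifs
    exacts [le_rfl, mul_nonneg (hp x z) (fret_nonneg hp (n + 1) z y)]

namespace IsStochastic

variable {X : Type*} {p : X → X → ℝ} (hp : IsStochastic p)

def row (hp : IsStochastic p) (z : X) : PMF X :=
  ⟨fun w => ENNReal.ofReal (p z w), by
    rw [← ENNReal.ofReal_one, ← hp.2.2 z, ENNReal.ofReal_tsum_of_nonneg (hp.1 z) (hp.2.1 z)]
    exact ENNReal.summable.hasSum⟩

theorem row_apply (z w : X) : hp.row z w = ENNReal.ofReal (p z w) := rfl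

theorem tsum_subtype_row (s : Set X) (z : X) :
    ∑' w : s, hp.row z w = ENNReal.ofReal (∑' w : s, p z w) :=
  (ENNReal.ofReal_tsum_of_nonneg (fun w : s => hp.1 z w) ((hp.2.1 z).subtype s)).symm

def law (hp : IsStochastic p) : ℕ → X → PMF X
  | 0, w => PMF.pure w
  | n + 1, w => (hp.law n w).bind hp.row

theorem law_succ' (n : ℕ) (w : X) : hp.law (n + 1) w = (hp.row w).bind (hp.law n) := by
  induction n generalizing w with
  | zero => simp [law, PMF.pure_bind, PMF.bind_pure]
  | succ n ih => rw [law, ih, PMF.bind_bind]; rfl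

theorem matPow_eq_toReal_law (n : ℕ) (w y : X) : matPow p n w y = (hp.law n w y).toReal := by
  induction n generalizing y with
  | zero => by_cases h : w = y <;> simp [matPow, law, PMF.pure_apply, h, eq_comm]
  | succ n ih =>
    rw [matPow, law, PMF.bind_apply, ENNReal.tsum_toReal_eq fun z =>
      ENNReal.mul_ne_top (PMF.apply_ne_top _ _) (PMF.apply_ne_top _ _)]
    refine tsum_congr fun z => ?_
    rw [ih, ENNReal.toReal_mul, row_apply, ENNReal.toReal_ofReal (hp.1 z y)]

theorem law_pos {n : ℕ} {w y : X} (h : 0 < matPow p n w y) : 0 < hp.law n w y := by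
  rw [matPow_eq_toReal_law] at h
  exact (ENNReal.toReal_pos_iff.1 h).1

/-- `hp.avoidProb x n z` is the probability that the chain started at `z` does not visit `x`
at the times `1, …, n`. -/
def avoidProb (hp : IsStochastic p) (x : X) : ℕ → X → ℝ≥0∞
  | 0, _ => 1
  | n + 1, z => ∑' w, if w = x then 0 else hp.row z w * hp.avoidProb x n w

variable (x : X)

theorem avoidProb_succ (n : ℕ) (z : X) :
    hp.avoidProb x (n + 1) z = ∑' w, if w = x then 0 else hp.row z w * hp.avoidProb x n w := rfl

theorem avoidProb_le_one (n : ℕ) (z : X) : hp.avoidProb x n z ≤ 1 := by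
  induction n generalizing z with
  | zero => exact le_rfl
  | succ n ih =>
    rw [avoidProb_succ, ← (hp.row z).tsum_coe]
    refine ENNReal.tsum_le_tsum fun w => ?_
    split_ifs
    exacts [zero_le, mul_le_of_le_one_right' (ih w)]

theorem antitone_avoidProb (z : X) : Antitone (hp.avoidProb x · z) := by
  suffices h : ∀ n z, hp.avoidProb x (n + 1) z ≤ hp.avoidProb x n z from
    antitone_nat_of_succ_le (h · z)
  intro n
  induction n with
  | zero => exact hp.avoidProb_le_one x 1
  | succ n ih =>
    intro z
    rw [avoidProb_succ, avoidProb_succ]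
    refine ENNReal.tsum_le_tsum fun w => ?_
    split_ifs
    exacts [le_rfl, mul_le_mul_right (ih w) _]

/-- Being at `x` at time `n` and avoiding `x` at the times `1, …, n` are disjoint events. -/
theorem law_add_avoidProb_le_one (n : ℕ) {w : X} (hw : w ≠ x) :
    hp.law n w x + hp.avoidProb x n w ≤ 1 := by
  induction n generalizing w with
  | zero => simp [law, avoidProb, PMF.pure_apply, Ne.symm hw]
  | succ n ih =>
    rw [law_succ', PMF.bind_apply, avoidProb_succ, ← ENNReal.tsum_add, ← (hp.row w).tsum_coe]
    refine ENNReal.tsum_le_tsum fun z => ?_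
    split_ifs with hz
    · rw [add_zero]
      exact mul_le_of_le_one_right' (PMF.coe_le_one _ _)
    · rw [← mul_add]
      exact mul_le_of_le_one_right' (ih hz)

theorem avoidProb_add_le {a b : ℕ} {s : ℝ≥0∞} (hb : ∀ u, hp.avoidProb x b u ≤ s) (z : X) :
    hp.avoidProb x (a + b) z ≤ s * hp.avoidProb x a z := by
  induction a generalizing z with
  | zero => simpa [avoidProb] using hb z
  | succ a ih =>
    rw [Nat.add_right_comm, avoidProb_succ, avoidProb_succ, ← ENNReal.tsum_mul_left]
    refine ENNReal.tsum_le_tsum fun w => ?_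
    split_ifs
    · simp
    · rw [mul_left_comm]
      exact mul_le_mul_right (ih w) _

theorem ofReal_fret_le_avoidProb (n : ℕ) (z : X) :
    ENNReal.ofReal (fret p (n + 1) z x) ≤ hp.avoidProb x n z := by
  induction n generalizing z with
  | zero => exact PMF.coe_le_one (hp.row z) x
  | succ n ih =>
    refine (ENNReal.ofReal_tsum_le fun w => ?_).trans (ENNReal.tsum_le_tsum fun w => ?_)
    · split_ifs
      exacts [le_rfl, mul_nonneg (hp.1 z w) (fret_nonneg hp.1 _ w x)]
    · split_ifs
      · simp
      · rw [ENNReal.ofReal_mul (hp.1 z w)]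
        exact mul_le_mul_right (ih w) _

theorem exists_avoidProb_le_one_sub (hirr : ∀ w, ∃ n, 0 < matPow p n w x) (F : Finset X) :
    ∃ m δ, 0 < δ ∧ δ ≤ 1 ∧ ∀ w ∈ F, w ≠ x → hp.avoidProb x m w ≤ 1 - δ := by
  choose n hn using hirr
  refine ⟨F.sup n, min 1 (F.inf fun w => hp.law (n w) w x),
    lt_min one_pos ((Finset.lt_inf_iff ENNReal.zero_lt_top).2 fun w _ => hp.law_pos (hn w)),
    min_le_left _ _, fun w hw hwx => ?_⟩
  calc hp.avoidProb x (F.sup n) w ≤ hp.avoidProb x (n w) w :=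
        hp.antitone_avoidProb x w (Finset.le_sup hw)
    _ ≤ 1 - hp.law (n w) w x :=
        ENNReal.le_sub_of_add_le_left (PMF.apply_ne_top _ _) (hp.law_add_avoidProb_le_one x _ hwx)
    _ ≤ 1 - min 1 (F.inf fun w => hp.law (n w) w x) :=
        tsub_le_tsub_left ((min_le_right _ _).trans (Finset.inf_le hw)) 1

theorem avoidProb_succ_le_of_tsum_compl_le {F : Finset X} {m : ℕ} {δ ε : ℝ≥0∞} (hδ : δ ≤ 1)
    (hF : ∀ w ∈ F, w ≠ x → hp.avoidProb x m w ≤ 1 - δ) {z : X}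
    (htail : ∑' w : {w // w ∉ F}, hp.row z w ≤ ε) :
    hp.avoidProb x (m + 1) z ≤ 1 - δ + δ * ε := by
  set tail : X → ℝ≥0∞ := {w | w ∉ F}.indicator (hp.row z)
  have htail' : ∑' w, tail w ≤ ε := (tsum_subtype {w | w ∉ F} (hp.row z)).symm.trans_le htail
  calc hp.avoidProb x (m + 1) z ≤ ∑' w, ((1 - δ) * hp.row z w + δ * tail w) := by
        refine ENNReal.tsum_le_tsum fun w => ?_
        by_cases hwx : w = x
        · simp [hwx]
        by_cases hwF : w ∈ F
        · simpa [hwx, hwF, tail, mul_comm] using mul_le_mul_right (hF w hwF hwx) (hp.row z w)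
        · simpa [hwx, hwF, tail, ← add_mul, tsub_add_cancel_of_le hδ] using
            mul_le_mul_right (hp.avoidProb_le_one x m w) (hp.row z w)
    _ = (1 - δ) * ∑' w, hp.row z w + δ * ∑' w, tail w := by
        rw [ENNReal.tsum_add, ENNReal.tsum_mul_left, ENNReal.tsum_mul_left]
    _ ≤ 1 - δ + δ * ε := by
        rw [PMF.tsum_coe, mul_one]
        gcongr

theorem exists_avoidProb_le_lt_one (hirr : ∀ w, ∃ n, 0 < matPow p n w x) {F : Finset X}
    {ε : ℝ≥0∞} (hε : ε < 1) (htail : ∀ z, ∑' w : {w // w ∉ F}, hp.row z w ≤ ε) :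
    ∃ M ρ, ρ < 1 ∧ ∀ z, hp.avoidProb x M z ≤ ρ := by
  obtain ⟨m, δ, hδ0, hδ1, hF⟩ := hp.exists_avoidProb_le_one_sub x hirr F
  refine ⟨m + 1, 1 - δ + δ * ε, ?_,
    fun z => hp.avoidProb_succ_le_of_tsum_compl_le x hδ1 hF (htail z)⟩
  have hδ_ne_top : δ ≠ ∞ := ne_top_of_le_ne_top ENNReal.one_ne_top hδ1
  calc 1 - δ + δ * ε < 1 - δ + δ * 1 :=
        ENNReal.add_lt_add_left (ENNReal.sub_ne_top ENNReal.one_ne_top)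
          (ENNReal.mul_lt_mul_right hδ0.ne' hδ_ne_top hε)
    _ = 1 := by rw [mul_one, tsub_add_cancel_of_le hδ1]

theorem avoidProb_le_pow_div {M : ℕ} {ρ : ℝ≥0∞} (hM : ∀ z, hp.avoidProb x M z ≤ ρ)
    (n : ℕ) (z : X) : hp.avoidProb x n z ≤ ρ ^ (n / M) := by
  refine (hp.antitone_avoidProb x z (Nat.div_mul_le_self n M)).trans ?_
  induction n / M generalizing z with
  | zero => simp [avoidProb]
  | succ k ih =>
    rw [Nat.succ_mul, pow_succ']
    exact (hp.avoidProb_add_le x hM z).trans (mul_le_mul_right (ih z) _)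

theorem summable_natCast_mul_fret {M : ℕ} {ρ : ℝ≥0∞} (hρ : ρ < 1)
    (hM : ∀ z, hp.avoidProb x M z ≤ ρ) :
    Summable (fun n : ℕ => (n : ℝ) * fret p n x x) := by
  have hM0 : M ≠ 0 := by
    rintro rfl
    exact lt_irrefl _ ((hM x).trans_lt hρ)
  have hρ_ne_top : ρ ≠ ∞ := (hρ.trans ENNReal.one_lt_top).ne
  have hfret (n : ℕ) : fret p (n + 1) x x ≤ ρ.toReal ^ (n / M) := by
    rw [← ENNReal.toReal_pow, ← ENNReal.ofReal_le_iff_le_toReal (ENNReal.pow_ne_top hρ_ne_top)]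
    exact (hp.ofReal_fret_le_avoidProb x n x).trans (hp.avoidProb_le_pow_div x hM n x)
  have hsum (k : ℕ) := summable_pow_mul_pow_div k ENNReal.toReal_nonneg
    ((ENNReal.toReal_lt_toReal hρ_ne_top ENNReal.one_ne_top).2 hρ) hM0
  rw [← summable_nat_add_iff 1]
  refine ((hsum 1).add (hsum 0)).of_nonneg_of_le
    (fun n => mul_nonneg (Nat.cast_nonneg _) (fret_nonneg hp.1 _ x x)) fun n => ?_
  have hn : (0 : ℝ) ≤ (n + 1 : ℕ) := Nat.cast_nonneg _
  simpa [add_mul] using mul_le_mul_of_nonneg_left (hfret n) hn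

end IsStochastic

theorem compact_markov_operator_positive_recurrent_general {X : Type*}
    (p : X → X → ℝ) (hp : IsStochastic p)
    (hirr : ∀ x y : X, ∃ n : ℕ, 0 < matPow p n x y)
    (T : lp (fun _ : X => ℝ) ∞ →L[ℝ] lp (fun _ : X => ℝ) ∞)
    (hT : ∀ (f : lp (fun _ : X => ℝ) ∞) (x : X), T f x = ∑' y, p x y * f y)
    (hcpt : IsCompactOperator T) :
    ∀ x : X, Summable (fun n : ℕ => (n : ℝ) * fret p n x x) := by
  intro x
  obtain ⟨F, hF⟩ := exists_finset_tsum_compl_lt_of_isCompactOperator hT hcpt one_half_pos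
  have htail (z : X) : ∑' w : {w // w ∉ F}, hp.row z w ≤ ENNReal.ofReal (1 / 2) :=
    (hp.tsum_subtype_row {w | w ∉ F} z).trans_le (ENNReal.ofReal_le_ofReal (hF z).le)
  obtain ⟨M, ρ, hρ, hM⟩ :=
    hp.exists_avoidProb_le_lt_one x (hirr · x) (ENNReal.ofReal_lt_one.2 one_half_lt_one) htail
  exact hp.summable_natCast_mul_fret x hρ hM

/-- if the Markov operator on `ℓ∞(X)` of an irreducible chain is compact,
then the chain is positive recurrent. -/
theorem compact_markov_operator_positive_recurrent {X : Type*} [Countable X]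
    (p : X → X → ℝ) (hp : IsStochastic p)
    (hirr : ∀ x y : X, ∃ n : ℕ, 0 < matPow p n x y)
    (T : lp (fun _ : X => ℝ) ∞ →L[ℝ] lp (fun _ : X => ℝ) ∞)
    (hT : ∀ (f : lp (fun _ : X => ℝ) ∞) (x : X), T f x = ∑' y, p x y * f y)
    (hcpt : IsCompactOperator T) :
    ∀ x : X, Summable (fun n : ℕ => (n : ℝ) * fret p n x x) :=
  compact_markov_operator_positive_recurrent_general p hp hirr T hT hcpt
end
end

section
/- Let (X,P) be a reversible Markov chain on a countable state space with reversibility measure m, let x ∈ X, A ⊆ X with 0 < m(A) < ∞, and ε ∈ [0,1) such that Σ_{y∈X∖A} p^{(n)}(x,y) ≤ ε for every n ≥ 1. Then for every z ∈ [0,1), G(x,x|z) ≥ ((1−ε)²/(1−z²)) · (m(x)/m(A)), where G(x,x|z) = Σ_{n≥0} p^{(n)}(x,x) z^n. -/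
open scoped Classical ENNReal

noncomputable section

section AuxRGF

variable {X : Type*} [Countable X]

lemma matPow_nonneg (p : X → X → ℝ) (hp : IsStochastic p) :
    ∀ (n : ℕ) (x y : X), 0 ≤ matPow p n x y := by
  intro n
  induction n with
  | zero =>
    intro x y
    simp only [matPow]
    split <;> norm_num
  | succ n ih =>
    intro x y
    exact tsum_nonneg fun z => mul_nonneg (ih x z) (hp.1 z y)

lemma p_le_one (p : X → X → ℝ) (hp : IsStochastic p) (x y : X) : p x y ≤ 1 := by
  have h := Summable.le_tsum (hp.2.1 x) y (fun z _ => hp.1 x z)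
  rwa [hp.2.2 x] at h

lemma q_tsum_one (p : X → X → ℝ) (hp : IsStochastic p) (x : X) :
    ∑' y, ENNReal.ofReal (p x y) = 1 := by
  rw [← ENNReal.ofReal_tsum_of_nonneg (hp.1 x) (hp.2.1 x), hp.2.2 x, ENNReal.ofReal_one]

lemma matPow_summable_tsum (p : X → X → ℝ) (hp : IsStochastic p) :
    ∀ (n : ℕ) (x : X), Summable (matPow p n x) ∧
      ∑' y, ENNReal.ofReal (matPow p n x y) = 1 := by
  intro n
  induction n with
  | zero =>
    intro x
    constructor
    · apply summable_of_ne_finset_zero (s := {x})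
      intro y hy
      simp only [Finset.mem_singleton] at hy
      simp only [matPow, if_neg (fun h : x = y => hy h.symm)]
    · rw [tsum_eq_single x]
      · simp [matPow]
      · intro y hy
        simp only [matPow, if_neg (fun h : x = y => hy h.symm), ENNReal.ofReal_zero]
  | succ n ih =>
    intro x
    obtain ⟨hs, ht⟩ := ih x
    have hnn := matPow_nonneg p hp n
    have hnn' := matPow_nonneg p hp (n + 1)
    have hsummul : ∀ y, Summable (fun z => matPow p n x z * p z y) := fun y =>
      Summable.of_nonneg_of_le (fun z => mul_nonneg (hnn x z) (hp.1 z y))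
        (fun z => mul_le_of_le_one_right (hnn x z) (p_le_one p hp z y)) hs
    have hofreal : ∀ y, ENNReal.ofReal (matPow p (n + 1) x y)
        = ∑' z, ENNReal.ofReal (matPow p n x z) * ENNReal.ofReal (p z y) := by
      intro y
      show ENNReal.ofReal (∑' z, matPow p n x z * p z y) = _
      rw [ENNReal.ofReal_tsum_of_nonneg (fun z => mul_nonneg (hnn x z) (hp.1 z y)) (hsummul y)]
      exact tsum_congr fun z => ENNReal.ofReal_mul (hnn x z)
    have htsum : ∑' y, ENNReal.ofReal (matPow p (n + 1) x y) = 1 := by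
      calc ∑' y, ENNReal.ofReal (matPow p (n + 1) x y)
          = ∑' (y) (z), ENNReal.ofReal (matPow p n x z) * ENNReal.ofReal (p z y) :=
            tsum_congr hofreal
        _ = ∑' (z) (y), ENNReal.ofReal (matPow p n x z) * ENNReal.ofReal (p z y) :=
            ENNReal.tsum_comm
        _ = ∑' z, ENNReal.ofReal (matPow p n x z) * ∑' y, ENNReal.ofReal (p z y) :=
            tsum_congr fun z => ENNReal.tsum_mul_left
        _ = ∑' z, ENNReal.ofReal (matPow p n x z) := by
            simp [q_tsum_one p hp]
        _ = 1 := ht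
    refine ⟨?_, htsum⟩
    have hfin : ∑' y, ENNReal.ofReal (matPow p (n + 1) x y) ≠ ⊤ := by
      rw [htsum]; exact ENNReal.one_ne_top
    exact (ENNReal.summable_toReal hfin).congr fun y => ENNReal.toReal_ofReal (hnn' x y)

lemma matPow_summable (p : X → X → ℝ) (hp : IsStochastic p) (n : ℕ) (x : X) :
    Summable (matPow p n x) := (matPow_summable_tsum p hp n x).1

lemma matPow_tsum_one (p : X → X → ℝ) (hp : IsStochastic p) (n : ℕ) (x : X) :
    ∑' y, matPow p n x y = 1 := by
  have h := (matPow_summable_tsum p hp n x).2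
  rw [← ENNReal.ofReal_tsum_of_nonneg (matPow_nonneg p hp n x) (matPow_summable p hp n x)] at h
  rw [← ENNReal.ofReal_one] at h
  exact (ENNReal.ofReal_eq_ofReal_iff (tsum_nonneg (matPow_nonneg p hp n x)) zero_le_one).mp h

lemma matPow_le_one (p : X → X → ℝ) (hp : IsStochastic p) (n : ℕ) (x y : X) :
    matPow p n x y ≤ 1 := by
  have h := Summable.le_tsum (matPow_summable p hp n x) y (fun z _ => matPow_nonneg p hp n x z)
  rwa [matPow_tsum_one p hp n x] at h

/-- ENNReal version of the `n`-step transition probabilities. -/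
def NP {X : Type*} (p : X → X → ℝ) (n : ℕ) (x y : X) : ℝ≥0∞ :=
  ENNReal.ofReal (matPow p n x y)

lemma NP_zero (p : X → X → ℝ) (x y : X) :
    NP p 0 x y = if x = y then 1 else 0 := by
  simp only [NP, matPow]
  split <;> simp

lemma NP_step (p : X → X → ℝ) (hp : IsStochastic p) (n : ℕ) (x y : X) :
    NP p (n + 1) x y = ∑' z, NP p n x z * ENNReal.ofReal (p z y) := by
  have hnn := matPow_nonneg p hp n
  have hsummul : Summable (fun z => matPow p n x z * p z y) :=
    Summable.of_nonneg_of_le (fun z => mul_nonneg (hnn x z) (hp.1 z y))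
      (fun z => mul_le_of_le_one_right (hnn x z) (p_le_one p hp z y))
      (matPow_summable p hp n x)
  show ENNReal.ofReal (∑' z, matPow p n x z * p z y) = _
  rw [ENNReal.ofReal_tsum_of_nonneg (fun z => mul_nonneg (hnn x z) (hp.1 z y)) hsummul]
  exact tsum_congr fun z => ENNReal.ofReal_mul (hnn x z)

lemma NP_CK (p : X → X → ℝ) (hp : IsStochastic p) :
    ∀ (b a : ℕ) (x y : X), NP p (a + b) x y = ∑' z, NP p a x z * NP p b z y := by
  intro b
  induction b with
  | zero =>
    intro a x y
    rw [Nat.add_zero]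
    symm
    rw [tsum_eq_single y]
    · rw [NP_zero, if_pos rfl, mul_one]
    · intro z hz
      rw [NP_zero, if_neg hz, mul_zero]
  | succ b ih =>
    intro a x y
    calc NP p (a + (b + 1)) x y
        = ∑' w, NP p (a + b) x w * ENNReal.ofReal (p w y) := NP_step p hp (a + b) x y
      _ = ∑' w, (∑' z, NP p a x z * NP p b z w) * ENNReal.ofReal (p w y) := by
          exact tsum_congr fun w => by rw [ih a x w]
      _ = ∑' (w) (z), NP p a x z * NP p b z w * ENNReal.ofReal (p w y) :=
          tsum_congr fun w => (ENNReal.tsum_mul_right).symm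
      _ = ∑' (z) (w), NP p a x z * NP p b z w * ENNReal.ofReal (p w y) := ENNReal.tsum_comm
      _ = ∑' z, NP p a x z * ∑' w, NP p b z w * ENNReal.ofReal (p w y) := by
          refine tsum_congr fun z => ?_
          rw [← ENNReal.tsum_mul_left]
          exact tsum_congr fun w => (mul_assoc _ _ _)
      _ = ∑' z, NP p a x z * NP p (b + 1) z y :=
          tsum_congr fun z => by rw [← NP_step p hp b z y]

lemma matPow_one (p : X → X → ℝ) (x y : X) : matPow p 1 x y = p x y := by
  show (∑' z, matPow p 0 x z * p z y) = p x y
  rw [tsum_eq_single x]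
  · simp [matPow]
  · intro z hz
    simp only [matPow, if_neg (fun h : x = z => hz h.symm), zero_mul]

lemma NP_one (p : X → X → ℝ) (x y : X) : NP p 1 x y = ENNReal.ofReal (p x y) := by
  simp only [NP, matPow_one]

lemma NP_rev (p : X → X → ℝ) (hp : IsStochastic p) (m : X → ℝ) (hm : ∀ x, 0 < m x)
    (hrev : ∀ x y, m x * p x y = m y * p y x) :
    ∀ (n : ℕ) (x y : X),
      ENNReal.ofReal (m x) * NP p n x y = ENNReal.ofReal (m y) * NP p n y x := by
  have hq : ∀ x y, ENNReal.ofReal (m x) * ENNReal.ofReal (p x y)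
      = ENNReal.ofReal (m y) * ENNReal.ofReal (p y x) := by
    intro x y
    rw [← ENNReal.ofReal_mul (hm x).le, ← ENNReal.ofReal_mul (hm y).le, hrev x y]
  intro n
  induction n with
  | zero =>
    intro x y
    by_cases hxy : x = y
    · subst hxy; rfl
    · rw [NP_zero, NP_zero, if_neg hxy, if_neg (Ne.symm hxy), mul_zero, mul_zero]
  | succ n ih =>
    intro x y
    have hstep : ∀ u v, NP p (n + 1) u v = ∑' z, ENNReal.ofReal (p u z) * NP p n z v := by
      intro u v
      have := NP_CK p hp n 1 u v
      rw [Nat.add_comm 1 n] at this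
      rw [this]
      exact tsum_congr fun z => by rw [NP_one]
    calc ENNReal.ofReal (m x) * NP p (n + 1) x y
        = ∑' z, ENNReal.ofReal (m x) * (ENNReal.ofReal (p x z) * NP p n z y) := by
          rw [hstep x y, ← ENNReal.tsum_mul_left]
      _ = ∑' z, (ENNReal.ofReal (m x) * ENNReal.ofReal (p x z)) * NP p n z y :=
          tsum_congr fun z => (mul_assoc _ _ _).symm
      _ = ∑' z, (ENNReal.ofReal (m z) * ENNReal.ofReal (p z x)) * NP p n z y :=
          tsum_congr fun z => by rw [hq x z]
      _ = ∑' z, ENNReal.ofReal (p z x) * (ENNReal.ofReal (m z) * NP p n z y) :=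
          tsum_congr fun z => by ring
      _ = ∑' z, ENNReal.ofReal (p z x) * (ENNReal.ofReal (m y) * NP p n y z) :=
          tsum_congr fun z => by rw [ih z y]
      _ = ENNReal.ofReal (m y) * ∑' z, NP p n y z * ENNReal.ofReal (p z x) := by
          rw [← ENNReal.tsum_mul_left]
          exact tsum_congr fun z => by ring
      _ = ENNReal.ofReal (m y) * NP p (n + 1) y x := by rw [← NP_step p hp n y x]

lemma matPow_rev (p : X → X → ℝ) (hp : IsStochastic p) (m : X → ℝ) (hm : ∀ x, 0 < m x)
    (hrev : ∀ x y, m x * p x y = m y * p y x) (n : ℕ) (x y : X) :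
    m x * matPow p n x y = m y * matPow p n y x := by
  have h := NP_rev p hp m hm hrev n x y
  rw [NP, NP, ← ENNReal.ofReal_mul (hm x).le, ← ENNReal.ofReal_mul (hm y).le] at h
  exact (ENNReal.ofReal_eq_ofReal_iff
    (mul_nonneg (hm x).le (matPow_nonneg p hp n x y))
    (mul_nonneg (hm y).le (matPow_nonneg p hp n y x))).mp h

lemma matPow_double_summable (p : X → X → ℝ) (hp : IsStochastic p) (n : ℕ) (x : X) :
    Summable (fun y => matPow p n x y * matPow p n y x) :=
  Summable.of_nonneg_of_le
    (fun y => mul_nonneg (matPow_nonneg p hp n x y) (matPow_nonneg p hp n y x))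
    (fun y => mul_le_of_le_one_right (matPow_nonneg p hp n x y) (matPow_le_one p hp n y x))
    (matPow_summable p hp n x)

lemma matPow_double (p : X → X → ℝ) (hp : IsStochastic p) (n : ℕ) (x : X) :
    matPow p (n + n) x x = ∑' y, matPow p n x y * matPow p n y x := by
  have hck := NP_CK p hp n n x x
  have hsum := matPow_double_summable p hp n x
  have h : ENNReal.ofReal (matPow p (n + n) x x)
      = ENNReal.ofReal (∑' y, matPow p n x y * matPow p n y x) := by
    rw [ENNReal.ofReal_tsum_of_nonneg
      (fun y => mul_nonneg (matPow_nonneg p hp n x y) (matPow_nonneg p hp n y x)) hsum]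
    rw [show ENNReal.ofReal (matPow p (n + n) x x) = NP p (n + n) x x from rfl, hck]
    exact tsum_congr fun y => (ENNReal.ofReal_mul (matPow_nonneg p hp n x y)).symm
  exact (ENNReal.ofReal_eq_ofReal_iff (matPow_nonneg p hp (n + n) x x)
    (tsum_nonneg fun y => mul_nonneg (matPow_nonneg p hp n x y)
      (matPow_nonneg p hp n y x))).mp h

end AuxRGF

/-- for a reversible chain with reversibility measure `m`, if
`∑_{y ∉ A} p⁽ⁿ⁾(x,y) ≤ ε` for all `n ≥ 1` with `0 < m(A) < ∞`, then for all `z ∈ [0,1)`,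
`G(x,x|z) ≥ ((1-ε)²/(1-z²)) (m(x)/m(A))`. -/
theorem reversible_green_function_lower_bound {X : Type*} [Countable X]
    (p : X → X → ℝ) (hp : IsStochastic p)
    (m : X → ℝ) (hm : ∀ x, 0 < m x)
    (hrev : ∀ x y, m x * p x y = m y * p y x)
    (x : X) (A : Set X) (hAfin : Summable (fun a : A => m (a : X)))
    (hApos : 0 < ∑' a : A, m (a : X))
    (ε : ℝ) (hε : ε ∈ Set.Ico (0 : ℝ) 1)
    (h : ∀ n : ℕ, 1 ≤ n → ∑' y, (if y ∈ A then 0 else matPow p n x y) ≤ ε) :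
    ∀ z ∈ Set.Ico (0 : ℝ) 1,
      (1 - ε) ^ 2 / (1 - z ^ 2) * (m x / ∑' a : A, m (a : X)) ≤
        ∑' n : ℕ, matPow p n x x * z ^ n := by
  intro z hz
  obtain ⟨hz0, hz1⟩ := hz
  obtain ⟨hε0, hε1⟩ := hε
  set mA : ℝ := ∑' a : A, m (a : X) with hmA
  set c : ℝ := (1 - ε) ^ 2 * (m x / mA) with hc
  have hc0 : 0 ≤ c := by
    apply mul_nonneg (sq_nonneg _)
    exact div_nonneg (hm x).le hApos.le
  -- Key bound for n ≥ 1
  have hkey1 : ∀ n : ℕ, 1 ≤ n → c ≤ matPow p (n + n) x x := by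
    intro n hn
    set f : X → ℝ := matPow p n x with hf
    have hsumf : Summable f := matPow_summable p hp n x
    have hfa : Summable (fun a : A => f (a : X)) := hsumf.subtype A
    have hfnn : ∀ y, 0 ≤ f y := matPow_nonneg p hp n x
    -- mass on A is at least 1 - ε
    have hsplit : 1 - ε ≤ ∑' a : A, f (a : X) := by
      have h1 : ∑' a : A, f (a : X) = ∑' y, A.indicator f y := tsum_subtype A f
      have h2 : ∑' y, Aᶜ.indicator f y ≤ ε := by
        have hh := h n hn
        have : ∀ y, Aᶜ.indicator f y = if y ∈ A then 0 else f y := by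
          intro y
          by_cases hy : y ∈ A <;> simp [Set.indicator, hy]
        rw [tsum_congr this]
        exact hh
      have h3 : ∑' y, A.indicator f y + ∑' y, Aᶜ.indicator f y = 1 := by
        rw [← Summable.tsum_add (hsumf.indicator A) (hsumf.indicator Aᶜ),
          ← matPow_tsum_one p hp n x]
        refine tsum_congr fun y => ?_
        rw [← Pi.add_apply, A.indicator_self_add_compl f]
      linarith
    set M : ℝ := matPow p (n + n) x x with hM
    have hM0 : 0 ≤ M := matPow_nonneg p hp (n + n) x x
    set C : ℝ := mA * M / m x with hC
    have hC0 : 0 ≤ C := div_nonneg (mul_nonneg hApos.le hM0) (hm x).le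
    -- Cauchy-Schwarz on finite subsets
    have hCS : ∀ s : Finset A, ∑ a ∈ s, f (a : X) ≤ Real.sqrt C := by
      intro s
      have hsnn : 0 ≤ ∑ a ∈ s, f (a : X) := Finset.sum_nonneg fun a _ => hfnn _
      rw [Real.le_sqrt hsnn hC0]
      have cs := Finset.sum_mul_sq_le_sq_mul_sq s
        (fun a : A => f (a : X) / Real.sqrt (m (a : X))) (fun a : A => Real.sqrt (m (a : X)))
      have e1 : ∀ a : A, f (a : X) / Real.sqrt (m (a : X)) * Real.sqrt (m (a : X)) = f (a : X) :=
        fun a => div_mul_cancel₀ _ (Real.sqrt_ne_zero'.mpr (hm _))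
      have e2 : ∀ a : A, Real.sqrt (m (a : X)) ^ 2 = m (a : X) := fun a => Real.sq_sqrt (hm _).le
      have e3 : ∀ a : A, (f (a : X) / Real.sqrt (m (a : X))) ^ 2 = f (a : X) ^ 2 / m (a : X) :=
        fun a => by rw [div_pow, e2 a]
      rw [Finset.sum_congr rfl fun a _ => e1 a] at cs
      rw [Finset.sum_congr rfl fun a _ => e3 a, Finset.sum_congr rfl fun a _ => e2 a] at cs
      -- bound the two factors
      have hmass : ∑ a ∈ s, m (a : X) ≤ mA :=
        Summable.sum_le_tsum s (fun a _ => (hm _).le) hAfin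
      have hterm : ∀ a : A, f (a : X) ^ 2 / m (a : X) = f (a : X) * matPow p n (a : X) x / m x := by
        intro a
        have hra' : m (a : X) * matPow p n (a : X) x = m x * f (a : X) :=
          matPow_rev p hp m hm hrev n (a : X) x
        rw [div_eq_div_iff (hm _).ne' (hm x).ne']
        calc f (a : X) ^ 2 * m x = f (a : X) * (m x * f (a : X)) := by ring
          _ = f (a : X) * (m (a : X) * matPow p n (a : X) x) := by rw [hra']
          _ = f (a : X) * matPow p n (a : X) x * m (a : X) := by ring
      have hsum2 : ∑ a ∈ s, f (a : X) ^ 2 / m (a : X)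
          = (∑ a ∈ s, f (a : X) * matPow p n (a : X) x) / m x := by
        rw [Finset.sum_congr rfl fun a _ => hterm a, Finset.sum_div]
      have hbound : ∑ a ∈ s, f (a : X) * matPow p n (a : X) x ≤ M := by
        rw [hM, matPow_double p hp n x]
        have hg : ∀ y, 0 ≤ matPow p n x y * matPow p n y x :=
          fun y => mul_nonneg (matPow_nonneg p hp n x y) (matPow_nonneg p hp n y x)
        calc ∑ a ∈ s, f (a : X) * matPow p n (a : X) x
            ≤ ∑' a : A, matPow p n x (a : X) * matPow p n (a : X) x :=
              Summable.sum_le_tsum s (fun a _ => hg _) ((matPow_double_summable p hp n x).subtype A)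
          _ ≤ ∑' y, matPow p n x y * matPow p n y x :=
              Summable.tsum_subtype_le _ A hg (matPow_double_summable p hp n x)
      have h2nn : 0 ≤ ∑ a ∈ s, f (a : X) * matPow p n (a : X) x :=
        Finset.sum_nonneg fun a _ => mul_nonneg (hfnn _) (matPow_nonneg p hp n _ x)
      calc (∑ a ∈ s, f (a : X)) ^ 2
          ≤ (∑ a ∈ s, f (a : X) ^ 2 / m (a : X)) * ∑ a ∈ s, m (a : X) := cs
        _ ≤ (M / m x) * mA := by
            apply mul_le_mul _ hmass (Finset.sum_nonneg fun a _ => (hm _).le)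
              (div_nonneg hM0 (hm x).le)
            rw [hsum2]
            exact (div_le_div_iff_of_pos_right (hm x)).mpr hbound
        _ = C := by rw [hC]; ring
    have hAle : ∑' a : A, f (a : X) ≤ Real.sqrt C := Summable.tsum_le_of_sum_le hfa hCS
    have hsq : (1 - ε) ^ 2 ≤ C := by
      have h1e : (0:ℝ) ≤ 1 - ε := by linarith
      have := pow_le_pow_left₀ h1e (le_trans hsplit hAle) 2
      rwa [Real.sq_sqrt hC0] at this
    -- conclude
    rw [hC] at hsq
    have h1 := (le_div_iff₀ (hm x)).mp hsq
    have hrw : c = ((1 - ε) ^ 2 * m x) / mA := by rw [hc]; ring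
    rw [hrw, div_le_iff₀ hApos]
    linarith
  have hkey : ∀ n : ℕ, c ≤ matPow p (n + n) x x := by
    intro n
    rcases Nat.eq_zero_or_pos n with h0 | h1
    · subst h0
      have h2 := hkey1 1 le_rfl
      have h3 : matPow p (0 + 0) x x = 1 := by simp [matPow]
      rw [h3]
      exact le_trans h2 (matPow_le_one p hp (1 + 1) x x)
    · exact hkey1 n h1
  have hz2 : z ^ 2 < 1 := by nlinarith
  have hz2' : (0 : ℝ) ≤ z ^ 2 := sq_nonneg z
  have hgeo_sum : Summable (fun n : ℕ => (z ^ 2) ^ n) := summable_geometric_of_lt_one hz2' hz2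
  have hG : Summable (fun n : ℕ => matPow p n x x * z ^ n) :=
    Summable.of_nonneg_of_le
      (fun n => mul_nonneg (matPow_nonneg p hp n x x) (pow_nonneg hz0 n))
      (fun n => mul_le_of_le_one_left (pow_nonneg hz0 n) (matPow_le_one p hp n x x))
      (summable_geometric_of_lt_one hz0 hz1)
  have hinj : Function.Injective (fun n : ℕ => n + n) := by
    intro a b hab
    have hab' : a + a = b + b := hab
    omega
  have hsub : Summable (fun n : ℕ => matPow p (n + n) x x * z ^ (n + n)) :=
    hG.comp_injective hinj
  have hpow : ∀ n : ℕ, (z ^ 2) ^ n = z ^ (n + n) := by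
    intro n
    rw [← two_mul, pow_mul]
  calc (1 - ε) ^ 2 / (1 - z ^ 2) * (m x / mA)
      = c * (1 - z ^ 2)⁻¹ := by rw [hc, div_eq_mul_inv]; ring
    _ = ∑' n : ℕ, c * (z ^ 2) ^ n := by
        rw [tsum_mul_left, tsum_geometric_of_lt_one hz2' hz2]
    _ ≤ ∑' n : ℕ, matPow p (n + n) x x * z ^ (n + n) := by
        refine Summable.tsum_le_tsum (fun n => ?_) (hgeo_sum.mul_left c) hsub
        rw [hpow n]
        exact mul_le_mul_of_nonneg_right (hkey n) (pow_nonneg hz0 _)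
    _ ≤ ∑' n : ℕ, matPow p n x x * z ^ n :=
        Summable.tsum_le_tsum_of_inj (fun n : ℕ => n + n) hinj
          (fun k _ => mul_nonneg (matPow_nonneg p hp k x x) (pow_nonneg hz0 k))
          (fun n => le_rfl) hsub hG
end
end
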